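/- Fix z ∈ ℂ and s ∈ ℂ with |s| < 1. If the infinite inner composition y(s) = Ω_{j=1}^∞ (w ↦ w + s^{2^j} w²) • z converges (which holds since ∑ⱼ |s^{2^j}| converges compactly normally on |s| < 1), then y satisfies the functional equation y(√s) = y(s) + s·y(s)² (for the branch with (√s)² = s). -/
import Mathlib


open Complex Metric Filter Topology

/-- `Vn n s z = k (s^2, k (s^4, ..., k (s^(2^n), z)))` where `k a w = w + a * w^2`:
the inner composition `Ω_{j=1}^n (w ↦ w + s^(2^j) * w^2) • z`. -/
def Vn : ℕ → ℂ → ℂ → ℂ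
  | 0, _, z => z
  | (n + 1), s, z => Vn n (s ^ 2) z + s ^ 2 * (Vn n (s ^ 2) z) ^ 2

theorem stmt_18 (z : ℂ) (y : ℂ → ℂ)
    (hy : ∀ s : ℂ, ‖s‖ < 1 → Tendsto (fun n => Vn n s z) atTop (nhds (y s))) :
    ∀ s t : ℂ, ‖s‖ < 1 → t ^ 2 = s → y t = y s + s * (y s) ^ 2 := by
  intro s t hs hts
  have ht : ‖t‖ < 1 := by
    nlinarith [norm_nonneg t, norm_nonneg s, norm_pow t 2, hts ▸ (norm_pow t 2)]
  have h1 : Tendsto (fun n => Vn (n + 1) t z) atTop (nhds (y t)) :=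
    (hy t ht).comp (tendsto_add_atTop_nat 1)
  have h2 : Tendsto (fun n => Vn n s z + s * (Vn n s z) ^ 2) atTop
      (nhds (y s + s * (y s) ^ 2)) := by
    have := hy s hs
    exact (this.add (tendsto_const_nhds.mul (this.pow 2)))
  have heq : (fun n => Vn (n + 1) t z) = fun n => Vn n s z + s * (Vn n s z) ^ 2 := by
    funext n; simp [Vn, hts]
  rw [heq] at h1
  exact tendsto_nhds_unique h1 h2
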